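/- arXiv:2412.03892 — 7 statements merged into one kernel-verified Lean document; each statement's English description precedes it below -/
import Mathlib

section
/- For all real parameters γ ∈ (0,1), η₁ ∈ (0,1), η₂ ∈ (0,1), η₃ ∈ (1,2), and all nonnegative reals s, ρ, ν, ψ, the inequality γ·s + ρ·ν + ψ ≤ max( γ̄·s, ρ̄·ν, ψ̄ ) holds, where γ̄ = 1 − (1 − η₁)(1 − γ), ρ̄ = ((1 + η₂)·η₃ / ((1 − γ)·η₁))·ρ, and ψ̄ = ((1 + η₂)·η₃ / ((1 − γ)·(η₃ − 1)·η₁·η₂))·ψ. Moreover γ̄ ∈ (0,1). (This is the key numerical inequality used in the proof of Theorem 3.5 to pass from the ASF decay bound to the invariance of the alternating simulation relation.) -/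
/-- The key numerical inequality in the proof of Theorem 3.5:
`γ·s + ρ·ν + ψ ≤ max(γ̄·s, ρ̄·ν, ψ̄)` with
`γ̄ = 1 − (1 − η₁)(1 − γ)`, `ρ̄ = ((1 + η₂)η₃/((1 − γ)η₁))·ρ`,
`ψ̄ = ((1 + η₂)η₃/((1 − γ)(η₃ − 1)η₁η₂))·ψ`; moreover `γ̄ ∈ (0,1)`. -/
theorem asf_decay_max_bound
    (γ η₁ η₂ η₃ : ℝ)
    (hγ : γ ∈ Set.Ioo (0 : ℝ) 1)
    (hη₁ : η₁ ∈ Set.Ioo (0 : ℝ) 1) (hη₂ : η₂ ∈ Set.Ioo (0 : ℝ) 1)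
    (hη₃ : η₃ ∈ Set.Ioo (1 : ℝ) 2)
    (s ρ ν ψ : ℝ) (hs : 0 ≤ s) (hρ : 0 ≤ ρ) (hν : 0 ≤ ν) (hψ : 0 ≤ ψ) :
    γ * s + ρ * ν + ψ ≤
      max ((1 - (1 - η₁) * (1 - γ)) * s)
        (max (((1 + η₂) * η₃ / ((1 - γ) * η₁) * ρ) * ν)
          ((1 + η₂) * η₃ / ((1 - γ) * (η₃ - 1) * η₁ * η₂) * ψ)) ∧
    (1 - (1 - η₁) * (1 - γ)) ∈ Set.Ioo (0 : ℝ) 1 := by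
  obtain ⟨hγ0, hγ1⟩ := hγ
  obtain ⟨h10, h11⟩ := hη₁
  obtain ⟨h20, h21⟩ := hη₂
  obtain ⟨h30, h31⟩ := hη₃
  have ha : 0 < (1 - γ) * η₁ := by nlinarith
  refine ⟨?_, ?_, ?_⟩
  · rcases le_or_gt (ρ * ν + ψ) ((1 - γ) * η₁ * s) with h | h
    · refine le_trans ?_ (le_max_left _ _)
      nlinarith
    · have hrp : 0 ≤ ρ * ν + ψ := add_nonneg (mul_nonneg hρ hν) hψ
      have hbound : ((1 - γ) * η₁) * (γ * s + ρ * ν + ψ) ≤ ρ * ν + ψ := by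
        nlinarith [mul_lt_mul_of_pos_left h hγ0,
          mul_nonneg (mul_nonneg (by linarith : (0:ℝ) ≤ 1 - γ) (by linarith : (0:ℝ) ≤ 1 - η₁)) hrp]
      refine le_trans ?_ (le_max_right _ _)
      rcases le_or_gt ψ (((1 + η₂) * η₃ - 1) * (ρ * ν)) with h2 | h2
      · refine le_trans ?_ (le_max_left _ _)
        have heq : ((1 + η₂) * η₃ / ((1 - γ) * η₁) * ρ) * ν
            = ((1 + η₂) * η₃ * ρ * ν) / ((1 - γ) * η₁) := by ring
        rw [heq, le_div_iff₀ ha]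
        nlinarith [hbound]
      · refine le_trans ?_ (le_max_right _ _)
        have hD : 0 < (1 - γ) * (η₃ - 1) * η₁ * η₂ := mul_pos (mul_pos (mul_pos (by linarith) (by linarith)) h10) h20
        have heq : (1 + η₂) * η₃ / ((1 - γ) * (η₃ - 1) * η₁ * η₂) * ψ
            = ((1 + η₂) * η₃ * ψ) / ((1 - γ) * (η₃ - 1) * η₁ * η₂) := by ring
        rw [heq, le_div_iff₀ hD]
        have h3 : (η₃ - 1) * η₂ ≤ (1 + η₂) * η₃ - 1 := by nlinarith
        nlinarith [mul_le_mul_of_nonneg_right hbound (le_of_lt (by nlinarith : (0:ℝ) < (η₃ - 1) * η₂)),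
          mul_le_mul_of_nonneg_left h3 hrp, mul_nonneg hρ hν]
  · nlinarith
  · nlinarith
end

section
/- Let A ∈ ℝ^{n×M}, B ∈ ℝ^{n×m}, 𝓜 : ℝⁿ → ℝ^M, let Π : ℝⁿ → ℝⁿ be any map, let U ⊆ ℝᵐ and Û ⊆ ℝᵐ be input sets, and let ν > 0 satisfy ‖û‖ ≤ ν for all û ∈ Û. Let S : ℝⁿ × ℝⁿ → ℝ be nonnegative and suppose there exist γ ∈ (0,1), ρ ≥ 0, ψ > 0 such that for all x, x̂ ∈ ℝⁿ and all û ∈ Û there exists u ∈ U with S( A·𝓜(x) + B·u , Π(A·𝓜(x̂) + B·û) ) ≤ γ·S(x, x̂) + ρ·‖û‖ + ψ. Fix any η₁, η₂ ∈ (0,1) and η₃ ∈ (1,2), and set ρ̄ = (1 + η₂)η₃ρ/((1 − γ)η₁) and ψ̄ = (1 + η₂)η₃ψ/((1 − γ)(η₃ − 1)η₁η₂). Then the relation R = {(x, x̂) ∈ ℝⁿ × ℝⁿ : S(x, x̂) ≤ max(ρ̄ν, ψ̄)} is invariant under the matched dynamics: for every (x, x̂) ∈ R and every û ∈ Û there exists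 u ∈ U such that ( A·𝓜(x) + B·u , Π(A·𝓜(x̂) + B·û) ) ∈ R. (Part (ii) of Theorem 3.5.) -/
open Matrix

/-!
With `M = max (ρ̄ ν) ψ̄`, the sublevel set `{S ≤ M}` is invariant under the contraction
`s ↦ γ s + ρ ‖û‖ + ψ` as soon as `ρ ν + ψ ≤ (1 - γ) M`. The bounds `ρ̄ ν ≤ M` and `ψ̄ ≤ M` make
`ρ ν` and `ψ` fractions `w₁` and `w₂` of `(1 - γ) M`, and
`w₁ + w₂ = η₁ (1 + (η₃ - 1) η₂) / ((1 + η₂) η₃) ≤ 1`.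
-/

section GainBound

variable {γ ρ ψ ν η₁ η₂ η₃ : ℝ}

lemma weights_add_le_one (hη₁ : η₁ ∈ Set.Ioo (0 : ℝ) 1) (hη₂ : 0 < η₂) (hη₃ : 1 < η₃) :
    η₁ / ((1 + η₂) * η₃) + (η₃ - 1) * η₁ * η₂ / ((1 + η₂) * η₃) ≤ 1 := by
  obtain ⟨h0, h1⟩ := hη₁
  rw [← add_div, div_le_one (by positivity)]
  nlinarith [mul_pos hη₂ (sub_pos.2 hη₃)]

lemma mul_add_le_one_sub_mul_of_le (hγ : γ < 1) (hη₁ : η₁ ∈ Set.Ioo (0 : ℝ) 1)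
    (hη₂ : 0 < η₂) (hη₃ : 1 < η₃) (hρν : 0 ≤ ρ * ν) {M : ℝ}
    (hρM : (1 + η₂) * η₃ * ρ / ((1 - γ) * η₁) * ν ≤ M)
    (hψM : (1 + η₂) * η₃ * ψ / ((1 - γ) * (η₃ - 1) * η₁ * η₂) ≤ M) :
    ρ * ν + ψ ≤ (1 - γ) * M := by
  have hη₁0 : 0 < η₁ := hη₁.1
  have hγ' : 0 < 1 - γ := sub_pos.2 hγ
  have hη₃' : 0 < η₃ - 1 := sub_pos.2 hη₃
  have hM : 0 ≤ M := le_trans (by rw [div_mul_eq_mul_div, mul_assoc]; positivity) hρM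
  rw [div_mul_eq_mul_div, div_le_iff₀ (by positivity)] at hρM
  rw [div_le_iff₀ (by positivity)] at hψM
  have hρν_le : ρ * ν ≤ (1 - γ) * M * (η₁ / ((1 + η₂) * η₃)) := by
    rw [mul_div_assoc', le_div_iff₀ (by positivity)]
    linarith
  have hψ_le : ψ ≤ (1 - γ) * M * ((η₃ - 1) * η₁ * η₂ / ((1 + η₂) * η₃)) := by
    rw [mul_div_assoc', le_div_iff₀ (by positivity)]
    linarith
  calc ρ * ν + ψ
      ≤ (1 - γ) * M * (η₁ / ((1 + η₂) * η₃) + (η₃ - 1) * η₁ * η₂ / ((1 + η₂) * η₃)) := by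
        linarith
    _ ≤ (1 - γ) * M :=
        mul_le_of_le_one_right (by positivity) (weights_add_le_one hη₁ hη₂ hη₃)

end GainBound

lemma contraction_step_le {γ s r c : ℝ} (hγ : 0 ≤ γ) (hs : s ≤ c) (hr : r ≤ (1 - γ) * c) :
    γ * s + r ≤ c := by
  nlinarith [mul_le_mul_of_nonneg_left hs hγ]

theorem asf_relation_invariant_general
    (n m M : ℕ)
    (A : Matrix (Fin n) (Fin M) ℝ) (B : Matrix (Fin n) (Fin m) ℝ)
    (𝓜 : EuclideanSpace ℝ (Fin n) → EuclideanSpace ℝ (Fin M))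
    (Piq : EuclideanSpace ℝ (Fin n) → EuclideanSpace ℝ (Fin n))
    (U Uh : Set (EuclideanSpace ℝ (Fin m)))
    (ν : ℝ) (hUh : ∀ uh ∈ Uh, ‖uh‖ ≤ ν)
    (S : EuclideanSpace ℝ (Fin n) → EuclideanSpace ℝ (Fin n) → ℝ)
    (γ ρ ψ : ℝ) (hγ : γ ∈ Set.Ioo (0 : ℝ) 1) (hρ : 0 ≤ ρ)
    (hASF : ∀ x xh : EuclideanSpace ℝ (Fin n), ∀ uh ∈ Uh, ∃ u ∈ U,
      S (WithLp.toLp 2 (A.mulVec (𝓜 x) + B.mulVec u)) (Piq (WithLp.toLp 2 (A.mulVec (𝓜 xh) + B.mulVec uh)))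
        ≤ γ * S x xh + ρ * ‖uh‖ + ψ)
    (η₁ η₂ η₃ : ℝ) (hη₁ : η₁ ∈ Set.Ioo (0 : ℝ) 1) (hη₂ : η₂ ∈ Set.Ioo (0 : ℝ) 1)
    (hη₃ : η₃ ∈ Set.Ioo (1 : ℝ) 2)
    (ρbar ψbar : ℝ)
    (hρbar : ρbar = (1 + η₂) * η₃ * ρ / ((1 - γ) * η₁))
    (hψbar : ψbar = (1 + η₂) * η₃ * ψ / ((1 - γ) * (η₃ - 1) * η₁ * η₂)) :
    ∀ x xh : EuclideanSpace ℝ (Fin n), S x xh ≤ max (ρbar * ν) ψbar →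
      ∀ uh ∈ Uh, ∃ u ∈ U,
        S (WithLp.toLp 2 (A.mulVec (𝓜 x) + B.mulVec u)) (Piq (WithLp.toLp 2 (A.mulVec (𝓜 xh) + B.mulVec uh)))
          ≤ max (ρbar * ν) ψbar := by
  intro x xh hR uh huh
  obtain ⟨u, hu, hstep⟩ := hASF x xh uh huh
  have huh_le : ‖uh‖ ≤ ν := hUh uh huh
  have hgain : ρ * ν + ψ ≤ (1 - γ) * max (ρbar * ν) ψbar := by
    subst hρbar hψbar
    exact mul_add_le_one_sub_mul_of_le hγ.2 hη₁ hη₂.1 hη₃.1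
      (mul_nonneg hρ ((norm_nonneg uh).trans huh_le)) (le_max_left _ _) (le_max_right _ _)
  refine ⟨u, hu, hstep.trans ?_⟩
  calc γ * S x xh + ρ * ‖uh‖ + ψ
      ≤ γ * S x xh + (ρ * ν + ψ) := by linarith [mul_le_mul_of_nonneg_left huh_le hρ]
    _ ≤ max (ρbar * ν) ψbar := contraction_step_le hγ.1.le hR hgain

/-- Part (ii) of Theorem 3.5: the relation
`R = {(x, x̂) : S(x, x̂) ≤ max(ρ̄ν, ψ̄)}` is invariant under the matched dynamics of the
dt-IANSP `x⁺ = A𝓜(x) + Bu` and its symbolic model `x̂⁺ = Π(A𝓜(x̂) + Bû)`. -/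
theorem asf_relation_invariant
    (n m M : ℕ) (hn : 0 < n) (hm : 0 < m) (hM : 0 < M)
    (A : Matrix (Fin n) (Fin M) ℝ) (B : Matrix (Fin n) (Fin m) ℝ)
    (𝓜 : EuclideanSpace ℝ (Fin n) → EuclideanSpace ℝ (Fin M))
    (Piq : EuclideanSpace ℝ (Fin n) → EuclideanSpace ℝ (Fin n))
    (U Uh : Set (EuclideanSpace ℝ (Fin m)))
    (ν : ℝ) (hν : 0 < ν) (hUh : ∀ uh ∈ Uh, ‖uh‖ ≤ ν)
    (S : EuclideanSpace ℝ (Fin n) → EuclideanSpace ℝ (Fin n) → ℝ)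
    (hS0 : ∀ x xh, 0 ≤ S x xh)
    (γ ρ ψ : ℝ) (hγ : γ ∈ Set.Ioo (0 : ℝ) 1) (hρ : 0 ≤ ρ) (hψ : 0 < ψ)
    (hASF : ∀ x xh : EuclideanSpace ℝ (Fin n), ∀ uh ∈ Uh, ∃ u ∈ U,
      S (WithLp.toLp 2 (A.mulVec (𝓜 x) + B.mulVec u)) (Piq (WithLp.toLp 2 (A.mulVec (𝓜 xh) + B.mulVec uh)))
        ≤ γ * S x xh + ρ * ‖uh‖ + ψ)
    (η₁ η₂ η₃ : ℝ) (hη₁ : η₁ ∈ Set.Ioo (0 : ℝ) 1) (hη₂ : η₂ ∈ Set.Ioo (0 : ℝ) 1)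
    (hη₃ : η₃ ∈ Set.Ioo (1 : ℝ) 2)
    (ρbar ψbar : ℝ)
    (hρbar : ρbar = (1 + η₂) * η₃ * ρ / ((1 - γ) * η₁))
    (hψbar : ψbar = (1 + η₂) * η₃ * ψ / ((1 - γ) * (η₃ - 1) * η₁ * η₂)) :
    ∀ x xh : EuclideanSpace ℝ (Fin n), S x xh ≤ max (ρbar * ν) ψbar →
      ∀ uh ∈ Uh, ∃ u ∈ U,
        S (WithLp.toLp 2 (A.mulVec (𝓜 x) + B.mulVec u)) (Piq (WithLp.toLp 2 (A.mulVec (𝓜 xh) + B.mulVec uh)))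
          ≤ max (ρbar * ν) ψbar :=
  asf_relation_invariant_general n m M A B 𝓜 Piq U Uh ν hUh S γ ρ ψ hγ hρ hASF η₁ η₂ η₃ hη₁ hη₂ hη₃
    ρbar ψbar hρbar hψbar
end

section
/- Let A ∈ ℝ^{n×M}, B ∈ ℝ^{n×m}, 𝓜 : ℝⁿ → ℝ^M, Π : ℝⁿ → ℝⁿ, U ⊆ ℝᵐ, Û ⊆ ℝᵐ, and ν > 0 with ‖û‖ ≤ ν for all û ∈ Û. Let S : ℝⁿ × ℝⁿ → ℝ be nonnegative, let α > 0 satisfy α‖x − x̂‖² ≤ S(x, x̂) for all x, x̂ ∈ ℝⁿ, and suppose there exist γ ∈ (0,1), ρ ≥ 0, ψ > 0 such that for all x, x̂ ∈ ℝⁿ and û ∈ Û there exists u ∈ U with S(A·𝓜(x) + B·u, Π(A·𝓜(x̂) + B·û)) ≤ γ·S(x, x̂) + ρ·‖û‖ + ψ. Fix η₁, η₂ ∈ (0,1), η₃ ∈ (1,2), and set ρ̄ = (1 + η₂)η₃ρ/((1 − γ)η₁), ψ̄ = (1 + η₂)η₃ψ/((1 − γ)(η₃ − 1)η₁η₂),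 ε = (max(ρ̄ν, ψ̄)/α)^{1/2}. Then for every initial pair x₀, x̂₀ ∈ ℝⁿ with S(x₀, x̂₀) ≤ max(ρ̄ν, ψ̄), every abstract input sequence û : ℕ → Û, and the abstract trajectory x̂(0) = x̂₀, x̂(k+1) = Π(A·𝓜(x̂(k)) + B·û(k)), there exist an input sequence u : ℕ → U and a trajectory x(0) = x₀, x(k+1) = A·𝓜(x(k)) + B·u(k) such that ‖x(k) − x̂(k)‖ ≤ ε for all k ∈ ℕ. -/
/-! The sublevel set `{S ≤ V}`, `V = max (ρ̄ ν) ψ̄`, is invariant: the choice of `ρ̄` and `ψ̄` makes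
`γ V + ρ ν + ψ ≤ V`, so from `S (x k) (x̂ k) ≤ V` the simulation inequality yields an input keeping
`S (x (k+1)) (x̂ (k+1)) ≤ V`. Choosing such inputs step by step gives a trajectory along which
`α ‖x k - x̂ k‖² ≤ S (x k) (x̂ k) ≤ V`, i.e. `‖x k - x̂ k‖ ≤ ε`. -/

theorem exists_controlled_trajectory {X W : Type*} (f : X → W → X) (U : Set W)
    (R : ℕ → X → Prop) (hstep : ∀ k x, R k x → ∃ u ∈ U, R (k + 1) (f x u))
    (x₀ : X) (h₀ : R 0 x₀) :
    ∃ (u : ℕ → W) (x : ℕ → X), (∀ k, u k ∈ U) ∧ x 0 = x₀ ∧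
      (∀ k, x (k + 1) = f (x k) (u k)) ∧ ∀ k, R k (x k) := by
  choose v hvU hvR using hstep
  let x : (k : ℕ) → {y // R k y} := fun k =>
    Nat.rec ⟨x₀, h₀⟩ (fun k xk => ⟨f xk.1 (v k xk.1 xk.2), hvR k xk.1 xk.2⟩) k
  exact ⟨fun k => v k (x k).1 (x k).2, fun k => (x k).1, fun k => hvU k _ _, rfl, fun _ => rfl,
    fun k => (x k).2⟩

theorem mul_add_add_le_of_rhoBar_psiBar_le {γ ρ ψ ν η₁ η₂ η₃ V : ℝ} (hγ : γ < 1)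
    (hη₁ : η₁ ∈ Set.Ioc 0 1) (hη₂ : 0 < η₂) (hη₃ : 1 < η₃) (hV : 0 ≤ V)
    (hρV : (1 + η₂) * η₃ * ρ / ((1 - γ) * η₁) * ν ≤ V)
    (hψV : (1 + η₂) * η₃ * ψ / ((1 - γ) * (η₃ - 1) * η₁ * η₂) ≤ V) :
    γ * V + ρ * ν + ψ ≤ V := by
  obtain ⟨hη₁0, hη₁1⟩ := hη₁
  have h1γ : 0 < 1 - γ := by linarith
  have hη₃1 : 0 < η₃ - 1 := by linarith
  rw [div_mul_eq_mul_div, div_le_iff₀ (by positivity)] at hρV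
  rw [div_le_iff₀ (by positivity)] at hψV
  have hweights : η₁ * (1 + η₂ * (η₃ - 1)) ≤ (1 + η₂) * η₃ := by
    nlinarith [mul_le_mul_of_nonneg_right hη₁1 (by positivity : 0 ≤ 1 + η₂ * (η₃ - 1))]
  -- `(1 + η₂) η₃ (ρ ν + ψ) = (1 - γ) η₁ (ρ̄ ν + η₂ (η₃ - 1) ψ̄) ≤ (1 - γ) η₁ (1 + η₂ (η₃ - 1)) V`
  have hscaled : (1 + η₂) * η₃ * (ρ * ν + ψ) ≤ (1 + η₂) * η₃ * ((1 - γ) * V) := by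
    nlinarith [mul_le_mul_of_nonneg_left hweights (mul_nonneg h1γ.le hV)]
  linarith [le_of_mul_le_mul_left hscaled (by positivity)]

theorem le_rpow_one_half_of_mul_sq_le {α t V : ℝ} (hα : 0 < α) (h : α * t ^ 2 ≤ V) :
    t ≤ (V / α) ^ ((1 : ℝ) / 2) := by
  rw [← Real.sqrt_eq_rpow]
  exact Real.le_sqrt_of_sq_le ((le_div_iff₀' hα).mpr h)

theorem asf_trajectory_closeness_general
    (n m M : ℕ)
    (A : Matrix (Fin n) (Fin M) ℝ) (B : Matrix (Fin n) (Fin m) ℝ)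
    (𝓜 : EuclideanSpace ℝ (Fin n) → EuclideanSpace ℝ (Fin M))
    (Piq : EuclideanSpace ℝ (Fin n) → EuclideanSpace ℝ (Fin n))
    (U Uh : Set (EuclideanSpace ℝ (Fin m)))
    (ν : ℝ) (hUh : ∀ uh ∈ Uh, ‖uh‖ ≤ ν)
    (S : EuclideanSpace ℝ (Fin n) → EuclideanSpace ℝ (Fin n) → ℝ)
    (α : ℝ) (hα : 0 < α)
    (hlow : ∀ x xh : EuclideanSpace ℝ (Fin n), α * ‖x - xh‖ ^ 2 ≤ S x xh)
    (γ ρ ψ : ℝ) (hγ : γ ∈ Set.Ioo (0 : ℝ) 1) (hρ : 0 ≤ ρ)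
    (hASF : ∀ x xh : EuclideanSpace ℝ (Fin n), ∀ uh ∈ Uh, ∃ u ∈ U,
      S (WithLp.toLp 2 (A.mulVec (𝓜 x) + B.mulVec u)) (Piq (WithLp.toLp 2 (A.mulVec (𝓜 xh) + B.mulVec uh)))
        ≤ γ * S x xh + ρ * ‖uh‖ + ψ)
    (η₁ η₂ η₃ : ℝ) (hη₁ : η₁ ∈ Set.Ioo (0 : ℝ) 1) (hη₂ : η₂ ∈ Set.Ioo (0 : ℝ) 1)
    (hη₃ : η₃ ∈ Set.Ioo (1 : ℝ) 2)
    (ρbar ψbar ε : ℝ)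
    (hρbar : ρbar = (1 + η₂) * η₃ * ρ / ((1 - γ) * η₁))
    (hψbar : ψbar = (1 + η₂) * η₃ * ψ / ((1 - γ) * (η₃ - 1) * η₁ * η₂))
    (hε : ε = (max (ρbar * ν) ψbar / α) ^ ((1 : ℝ) / 2)) :
    ∀ x₀ xh₀ : EuclideanSpace ℝ (Fin n), S x₀ xh₀ ≤ max (ρbar * ν) ψbar →
      ∀ uh : ℕ → EuclideanSpace ℝ (Fin m), (∀ k, uh k ∈ Uh) →
        ∀ xh : ℕ → EuclideanSpace ℝ (Fin n), xh 0 = xh₀ →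
          (∀ k, xh (k + 1) = Piq (WithLp.toLp 2 (A.mulVec (𝓜 (xh k)) + B.mulVec (uh k)))) →
          ∃ (u : ℕ → EuclideanSpace ℝ (Fin m)) (x : ℕ → EuclideanSpace ℝ (Fin n)),
            (∀ k, u k ∈ U) ∧ x 0 = x₀ ∧
            (∀ k, x (k + 1) = WithLp.toLp 2 (A.mulVec (𝓜 (x k)) + B.mulVec (u k))) ∧
            ∀ k, ‖x k - xh k‖ ≤ ε := by
  intro x₀ xh₀ hinit uh huh xh hxh0 hxhstep
  set V := max (ρbar * ν) ψbar
  have hV : 0 ≤ V := (by positivity : 0 ≤ α * ‖x₀ - xh₀‖ ^ 2).trans ((hlow _ _).trans hinit)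
  have hdecay : γ * V + ρ * ν + ψ ≤ V :=
    mul_add_add_le_of_rhoBar_psiBar_le hγ.2 (Set.Ioo_subset_Ioc_self hη₁) hη₂.1 hη₃.1 hV
      (hρbar ▸ le_max_left _ _) (hψbar ▸ le_max_right _ _)
  have hinvariant : ∀ k y, S y (xh k) ≤ V →
      ∃ u ∈ U, S (WithLp.toLp 2 (A.mulVec (𝓜 y) + B.mulVec u)) (xh (k + 1)) ≤ V := by
    intro k y hy
    obtain ⟨u, hu, hSu⟩ := hASF y (xh k) (uh k) (huh k)
    refine ⟨u, hu, (hxhstep k).symm ▸ hSu.trans (le_trans ?_ hdecay)⟩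
    gcongr
    exacts [hγ.1.le, hUh _ (huh k)]
  obtain ⟨u, x, hu, hx0, hx, hSV⟩ := exists_controlled_trajectory _ U _ hinvariant x₀ (hxh0 ▸ hinit)
  exact ⟨u, x, hu, hx0, hx, fun k =>
    hε ▸ le_rpow_one_half_of_mul_sq_le hα ((hlow _ _).trans (hSV k))⟩

/-- Theorem 3.5 (trajectory closeness): if `S` is an ASF from the symbolic model to the
dt-IANSP, then for any related initial pair and any abstract input sequence, there exist a
concrete input sequence and a concrete trajectory remaining `ε`-close to the abstract one. -/
theorem asf_trajectory_closeness
    (n m M : ℕ) (hn : 0 < n) (hm : 0 < m) (hM : 0 < M)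
    (A : Matrix (Fin n) (Fin M) ℝ) (B : Matrix (Fin n) (Fin m) ℝ)
    (𝓜 : EuclideanSpace ℝ (Fin n) → EuclideanSpace ℝ (Fin M))
    (Piq : EuclideanSpace ℝ (Fin n) → EuclideanSpace ℝ (Fin n))
    (U Uh : Set (EuclideanSpace ℝ (Fin m)))
    (ν : ℝ) (hν : 0 < ν) (hUh : ∀ uh ∈ Uh, ‖uh‖ ≤ ν)
    (S : EuclideanSpace ℝ (Fin n) → EuclideanSpace ℝ (Fin n) → ℝ)
    (hS0 : ∀ x xh, 0 ≤ S x xh)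
    (α : ℝ) (hα : 0 < α)
    (hlow : ∀ x xh : EuclideanSpace ℝ (Fin n), α * ‖x - xh‖ ^ 2 ≤ S x xh)
    (γ ρ ψ : ℝ) (hγ : γ ∈ Set.Ioo (0 : ℝ) 1) (hρ : 0 ≤ ρ) (hψ : 0 < ψ)
    (hASF : ∀ x xh : EuclideanSpace ℝ (Fin n), ∀ uh ∈ Uh, ∃ u ∈ U,
      S (WithLp.toLp 2 (A.mulVec (𝓜 x) + B.mulVec u)) (Piq (WithLp.toLp 2 (A.mulVec (𝓜 xh) + B.mulVec uh)))
        ≤ γ * S x xh + ρ * ‖uh‖ + ψ)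
    (η₁ η₂ η₃ : ℝ) (hη₁ : η₁ ∈ Set.Ioo (0 : ℝ) 1) (hη₂ : η₂ ∈ Set.Ioo (0 : ℝ) 1)
    (hη₃ : η₃ ∈ Set.Ioo (1 : ℝ) 2)
    (ρbar ψbar ε : ℝ)
    (hρbar : ρbar = (1 + η₂) * η₃ * ρ / ((1 - γ) * η₁))
    (hψbar : ψbar = (1 + η₂) * η₃ * ψ / ((1 - γ) * (η₃ - 1) * η₁ * η₂))
    (hε : ε = (max (ρbar * ν) ψbar / α) ^ ((1 : ℝ) / 2)) :
    ∀ x₀ xh₀ : EuclideanSpace ℝ (Fin n), S x₀ xh₀ ≤ max (ρbar * ν) ψbar →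
      ∀ uh : ℕ → EuclideanSpace ℝ (Fin m), (∀ k, uh k ∈ Uh) →
        ∀ xh : ℕ → EuclideanSpace ℝ (Fin n), xh 0 = xh₀ →
          (∀ k, xh (k + 1) = Piq (WithLp.toLp 2 (A.mulVec (𝓜 (xh k)) + B.mulVec (uh k)))) →
          ∃ (u : ℕ → EuclideanSpace ℝ (Fin m)) (x : ℕ → EuclideanSpace ℝ (Fin n)),
            (∀ k, u k ∈ U) ∧ x 0 = x₀ ∧
            (∀ k, x (k + 1) = WithLp.toLp 2 (A.mulVec (𝓜 (x k)) + B.mulVec (u k))) ∧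
            ∀ k, ‖x k - xh k‖ ≤ ε :=
  asf_trajectory_closeness_general n m M A B 𝓜 Piq U Uh ν hUh S α hα hlow γ ρ ψ hγ hρ hASF η₁ η₂ η₃
    hη₁ hη₂ hη₃ ρbar ψbar ε hρbar hψbar hε
end

section
/- (Special case ρ ≡ 0 of Theorem 3.5.) Let A ∈ ℝ^{n×M}, B ∈ ℝ^{n×m}, 𝓜 : ℝⁿ → ℝ^M, Π : ℝⁿ → ℝⁿ, U ⊆ ℝᵐ, Û ⊆ ℝᵐ. Let S : ℝⁿ × ℝⁿ → ℝ be nonnegative, let α > 0 satisfy α‖x − x̂‖² ≤ S(x, x̂) for all x, x̂ ∈ ℝⁿ, and suppose there exist γ ∈ (0,1) and ψ > 0 such that for all x, x̂ ∈ ℝⁿ and û ∈ Û there exists u ∈ U with S(A·𝓜(x) + B·u, Π(A·𝓜(x̂) + B·û)) ≤ γ·S(x, x̂) + ψ. Fix any η₁ ∈ (0,1) and set ψ̄ = ψ/((1 − γ)η₁). Then the relation R = {(x, x̂) : S(x, x̂) ≤ ψ̄} satisfies: (i) for every (x, x̂) ∈ R, ‖x − x̂‖ ≤ (ψ̄/α)^{1/2};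 and (ii) for every (x, x̂) ∈ R and every û ∈ Û there exists u ∈ U such that (A·𝓜(x) + B·u, Π(A·𝓜(x̂) + B·û)) ∈ R. -/
open Matrix

/-! Lower-bounding `S` by `α‖x - x̂‖²` turns the sublevel bound `S ≤ ψ̄` into `‖x - x̂‖² ≤ ψ̄ / α`.
The sublevel set is invariant because the ASF decrease `S ↦ γ S + ψ` maps `(-∞, ψ̄]` into itself as
soon as `ψ ≤ (1 - γ) ψ̄`, and `(1 - γ) ψ̄ = ψ / η₁ ≥ ψ`. -/

lemma le_rpow_half_div_of_mul_sq_le {α d c : ℝ} (hα : 0 < α) (hd : 0 ≤ d) (h : α * d ^ 2 ≤ c) :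
    d ≤ (c / α) ^ ((1 : ℝ) / 2) := by
  have hc : 0 ≤ c := (by positivity : 0 ≤ α * d ^ 2).trans h
  rw [← Real.sqrt_eq_rpow, Real.le_sqrt hd (div_nonneg hc hα.le), le_div_iff₀ hα]
  linarith

lemma mul_add_le_of_le_of_le_one_sub_mul {γ ψ s c : ℝ} (hγ : 0 ≤ γ) (hψ : ψ ≤ (1 - γ) * c)
    (hs : s ≤ c) : γ * s + ψ ≤ c := by
  nlinarith

lemma le_one_sub_mul_div_one_sub_mul {γ ψ η : ℝ} (hγ : γ < 1) (hψ : 0 ≤ ψ) (hη : η ∈ Set.Ioc 0 1) :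
    ψ ≤ (1 - γ) * (ψ / ((1 - γ) * η)) := by
  obtain ⟨hη0, hη1⟩ := hη
  rw [mul_comm (1 - γ) η, ← div_div, mul_div_cancel₀ _ (sub_pos.mpr hγ).ne', le_div_iff₀ hη0]
  exact mul_le_of_le_one_right hψ hη1

theorem asf_relation_rho_zero_general
    (n m M : ℕ)
    (A : Matrix (Fin n) (Fin M) ℝ) (B : Matrix (Fin n) (Fin m) ℝ)
    (𝓜 : EuclideanSpace ℝ (Fin n) → EuclideanSpace ℝ (Fin M))
    (Piq : EuclideanSpace ℝ (Fin n) → EuclideanSpace ℝ (Fin n))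
    (U Uh : Set (EuclideanSpace ℝ (Fin m)))
    (S : EuclideanSpace ℝ (Fin n) → EuclideanSpace ℝ (Fin n) → ℝ)
    (α : ℝ) (hα : 0 < α)
    (hlow : ∀ x xh : EuclideanSpace ℝ (Fin n), α * ‖x - xh‖ ^ 2 ≤ S x xh)
    (γ ψ : ℝ) (hγ : γ ∈ Set.Ioo (0 : ℝ) 1) (hψ : 0 < ψ)
    (hASF : ∀ x xh : EuclideanSpace ℝ (Fin n), ∀ uh ∈ Uh, ∃ u ∈ U,
      S (WithLp.toLp 2 (A.mulVec (𝓜 x) + B.mulVec u)) (Piq (WithLp.toLp 2 (A.mulVec (𝓜 xh) + B.mulVec uh)))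
        ≤ γ * S x xh + ψ)
    (η₁ : ℝ) (hη₁ : η₁ ∈ Set.Ioo (0 : ℝ) 1)
    (ψbar : ℝ) (hψbar : ψbar = ψ / ((1 - γ) * η₁)) :
    (∀ x xh : EuclideanSpace ℝ (Fin n), S x xh ≤ ψbar →
        ‖x - xh‖ ≤ (ψbar / α) ^ ((1 : ℝ) / 2)) ∧
    (∀ x xh : EuclideanSpace ℝ (Fin n), S x xh ≤ ψbar →
        ∀ uh ∈ Uh, ∃ u ∈ U,
          S (WithLp.toLp 2 (A.mulVec (𝓜 x) + B.mulVec u)) (Piq (WithLp.toLp 2 (A.mulVec (𝓜 xh) + B.mulVec uh))) ≤ ψbar) := by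
  refine ⟨fun x xh hR ↦ le_rpow_half_div_of_mul_sq_le hα (norm_nonneg _) ((hlow x xh).trans hR),
    fun x xh hR uh huh ↦ ?_⟩
  obtain ⟨u, hu, hstep⟩ := hASF x xh uh huh
  have hψ_le : ψ ≤ (1 - γ) * ψbar :=
    hψbar ▸ le_one_sub_mul_div_one_sub_mul hγ.2 hψ.le ⟨hη₁.1, hη₁.2.le⟩
  exact ⟨u, hu, hstep.trans (mul_add_le_of_le_of_le_one_sub_mul hγ.1.le hψ_le hR)⟩

/-- Special case `ρ ≡ 0` of Theorem 3.5 (Remark 3.6): with `ψ̄ = ψ/((1 − γ)η₁)`, the relation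
`R = {(x, x̂) : S(x, x̂) ≤ ψ̄}` gives `ε`-closeness with `ε = (ψ̄/α)^{1/2}` and is invariant
under the matched dynamics. -/
theorem asf_relation_rho_zero
    (n m M : ℕ) (hn : 0 < n) (hm : 0 < m) (hM : 0 < M)
    (A : Matrix (Fin n) (Fin M) ℝ) (B : Matrix (Fin n) (Fin m) ℝ)
    (𝓜 : EuclideanSpace ℝ (Fin n) → EuclideanSpace ℝ (Fin M))
    (Piq : EuclideanSpace ℝ (Fin n) → EuclideanSpace ℝ (Fin n))
    (U Uh : Set (EuclideanSpace ℝ (Fin m)))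
    (S : EuclideanSpace ℝ (Fin n) → EuclideanSpace ℝ (Fin n) → ℝ)
    (hS0 : ∀ x xh, 0 ≤ S x xh)
    (α : ℝ) (hα : 0 < α)
    (hlow : ∀ x xh : EuclideanSpace ℝ (Fin n), α * ‖x - xh‖ ^ 2 ≤ S x xh)
    (γ ψ : ℝ) (hγ : γ ∈ Set.Ioo (0 : ℝ) 1) (hψ : 0 < ψ)
    (hASF : ∀ x xh : EuclideanSpace ℝ (Fin n), ∀ uh ∈ Uh, ∃ u ∈ U,
      S (WithLp.toLp 2 (A.mulVec (𝓜 x) + B.mulVec u)) (Piq (WithLp.toLp 2 (A.mulVec (𝓜 xh) + B.mulVec uh)))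
        ≤ γ * S x xh + ψ)
    (η₁ : ℝ) (hη₁ : η₁ ∈ Set.Ioo (0 : ℝ) 1)
    (ψbar : ℝ) (hψbar : ψbar = ψ / ((1 - γ) * η₁)) :
    (∀ x xh : EuclideanSpace ℝ (Fin n), S x xh ≤ ψbar →
        ‖x - xh‖ ≤ (ψbar / α) ^ ((1 : ℝ) / 2)) ∧
    (∀ x xh : EuclideanSpace ℝ (Fin n), S x xh ≤ ψbar →
        ∀ uh ∈ Uh, ∃ u ∈ U,
          S (WithLp.toLp 2 (A.mulVec (𝓜 x) + B.mulVec u)) (Piq (WithLp.toLp 2 (A.mulVec (𝓜 xh) + B.mulVec uh))) ≤ ψbar) :=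
  asf_relation_rho_zero_general n m M A B 𝓜 Piq U Uh S α hα hlow γ ψ hγ hψ hASF η₁ hη₁ ψbar hψbar
end

section
/- (Data-based representation, Lemma 3.7.) Let n, m, M, T be positive integers. Let A ∈ ℝ^{n×M}, B ∈ ℝ^{n×m}, and let 𝓜 : ℝⁿ → ℝ^M. Fix x, x̂ ∈ ℝⁿ and suppose Υ₁, Υ₂ ∈ ℝ^{M×n} satisfy 𝓜(x) = Υ₁·x and 𝓜(x̂) = Υ₂·x̂. Let 𝕄, 𝕄̂ ∈ ℝ^{M×T}, 𝓘, 𝓘̂ ∈ ℝ^{m×T}, and O⁺, Ô⁺ ∈ ℝ^{n×T} satisfy the data equations O⁺ = A·𝕄 + B·𝓘 and Ô⁺ = A·𝕄̂ + B·𝓘̂. Suppose G₁, G₂ ∈ ℝ^{T×n} satisfy Υ₁ = 𝕄·G₁ and Υ₂ = 𝕄̂·G₂. Fix û ∈ ℝᵐ and define the hybrid interface input u = 𝓘·(G₁·x) − 𝓘̂·(G₂·x̂) + û ∈ ℝᵐ. Then A·𝓜(x) + B·u − (A·𝓜(x̂) + B·û) = O⁺·(G₁·x) − Ô⁺·(G₂·x̂),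 where all products are matrix-matrix or matrix-vector products over ℝ. -/
open Matrix

/-- Lemma 3.7 (data-based representation): with the data equations `O⁺ = A𝕄 + B𝓘`,
`Ô⁺ = A𝕄̂ + B𝓘̂`, the factorizations `Υ₁ = 𝕄G₁`, `Υ₂ = 𝕄̂G₂`, `𝓜(x) = Υ₁x`,
`𝓜(x̂) = Υ₂x̂`, and the hybrid interface input `u = 𝓘G₁x − 𝓘̂G₂x̂ + û`, one has
`A𝓜(x) + Bu − (A𝓜(x̂) + Bû) = O⁺G₁x − Ô⁺G₂x̂`. -/
theorem data_based_representation
    (n m M T : ℕ) (hn : 0 < n) (hm : 0 < m) (hM : 0 < M) (hT : 0 < T)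
    (A : Matrix (Fin n) (Fin M) ℝ) (B : Matrix (Fin n) (Fin m) ℝ)
    (𝓜 : (Fin n → ℝ) → (Fin M → ℝ))
    (x xh : Fin n → ℝ)
    (Υ₁ Υ₂ : Matrix (Fin M) (Fin n) ℝ)
    (hΥ₁ : 𝓜 x = Υ₁.mulVec x) (hΥ₂ : 𝓜 xh = Υ₂.mulVec xh)
    (𝕄 𝕄h : Matrix (Fin M) (Fin T) ℝ)
    (𝓘 𝓘h : Matrix (Fin m) (Fin T) ℝ)
    (Op Ohp : Matrix (Fin n) (Fin T) ℝ)
    (hOp : Op = A * 𝕄 + B * 𝓘) (hOhp : Ohp = A * 𝕄h + B * 𝓘h)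
    (G₁ G₂ : Matrix (Fin T) (Fin n) ℝ)
    (hG₁ : Υ₁ = 𝕄 * G₁) (hG₂ : Υ₂ = 𝕄h * G₂)
    (uh u : Fin m → ℝ)
    (hu : u = 𝓘.mulVec (G₁.mulVec x) - 𝓘h.mulVec (G₂.mulVec xh) + uh) :
    A.mulVec (𝓜 x) + B.mulVec u - (A.mulVec (𝓜 xh) + B.mulVec uh)
      = Op.mulVec (G₁.mulVec x) - Ohp.mulVec (G₂.mulVec xh) := by
  subst hOp hOhp hG₁ hG₂ hu
  simp only [hΥ₁, hΥ₂, Matrix.add_mulVec, Matrix.sub_mulVec, Matrix.mulVec_add, Matrix.mulVec_sub, ← Matrix.mulVec_mulVec]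
  abel
end

section
/- (Theorem 4.4, data-driven ASF, pointwise form.) Let n, m, M, T be positive integers. Let A ∈ ℝ^{n×M}, B ∈ ℝ^{n×m}, 𝓜 : ℝⁿ → ℝ^M. Let Ξ ∈ ℝ^{n×n} be symmetric positive definite and set P = Ξ⁻¹. Let Θ ∈ ℝ^{n×n}, μ > 0, γ ∈ (0,1), δ > 0, and let Π : ℝⁿ → ℝⁿ satisfy ‖Π(y) − y‖ ≤ δ for all y ∈ ℝⁿ (Euclidean norm). Fix x, x̂ ∈ ℝⁿ, û ∈ ℝᵐ, and suppose: (a) there exist Υ₁, Υ₂ ∈ ℝ^{M×n} with 𝓜(x) = Υ₁·x and 𝓜(x̂) = Υ₂·x̂; (b) data matrices 𝕄, 𝕄̂ ∈ ℝ^{M×T}, 𝓘, 𝓘̂ ∈ ℝ^{m×T}, O⁺, Ô⁺ ∈ ℝ^{n×T} satisfy O⁺ = A𝕄 + B𝓘 and Ô⁺ = A𝕄̂ + B𝓘̂; (c) there exist Y₁, Y₂ ∈ ℝ^{T×n} with 𝕄·Y₁ = Υ₁·Ξ, 𝕄̂·Y₂ = Υ₂·Ξ, O⁺·Y₁ = Θ,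 and Ô⁺·Y₂ = Θ; (d) the symmetric block matrix [[(1/(1+μ))·Ξ, Θ],[Θᵀ, γ·Ξ]] ∈ ℝ^{2n×2n} is positive semidefinite. Define u = 𝓘·(Y₁·(P·x)) − 𝓘̂·(Y₂·(P·x̂)) + û and S(a,b) = (a − b)ᵀ·P·(a − b). Then S( A·𝓜(x) + B·u , Π(A·𝓜(x̂) + B·û) ) ≤ γ·S(x, x̂) + (1 + 1/μ)·‖P^{1/2}‖²·δ², where P^{1/2} is the positive semidefinite square root of P and ‖·‖ is the induced 2-norm (ℓ²-operator norm) of a matrix. -/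
/-!
With `e = x - x̂` and `P = Ξ⁻¹`, the data identities turn the interface into the closed loop
`A𝓜(x) + Bu - (A𝓜(x̂) + Bû) = ΘPe`, so the first argument of `S` minus the second is `ΘPe - q`
with the quantization error `q = Π(y) - y`. Young's inequality splits `S` into
`(1 + μ)‖ΘPe‖²_P + (1 + 1/μ)‖q‖²_P`; the LMI, tested against `(-(1 + μ)PΘPe, Pe)`, bounds the
first term by `γ‖e‖²_P`, and `‖q‖²_P = ‖P^{1/2} q‖² ≤ ‖P^{1/2}‖² δ²`.
-/

open Matrix
open scoped Matrix.Norms.L2Operator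

namespace Matrix.PosSemidef

open scoped ComplexOrder

/-- The positive semidefinite square root of a positive semidefinite matrix
(the definition `Matrix.PosSemidef.sqrt` of the older Mathlib). -/
noncomputable def sqrt {n 𝕜 : Type*} [Fintype n] [RCLike 𝕜] [DecidableEq n]
    {A : Matrix n n 𝕜} (hA : A.PosSemidef) : Matrix n n 𝕜 :=
  hA.1.eigenvectorUnitary.1 * diagonal ((↑) ∘ (√·) ∘ hA.1.eigenvalues) *
    (star hA.1.eigenvectorUnitary : Matrix n n 𝕜)

end Matrix.PosSemidef

namespace Matrix

open scoped ComplexOrder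

variable {ι 𝕜 : Type*} [Fintype ι] [RCLike 𝕜]

lemma PosSemidef.conjTranspose_sqrt [DecidableEq ι] {A : Matrix ι ι 𝕜} (hA : A.PosSemidef) : hA.sqrtᴴ = hA.sqrt := by
  have hstar : star (RCLike.ofReal ∘ (√·) ∘ hA.1.eigenvalues : ι → 𝕜) =
      RCLike.ofReal ∘ (√·) ∘ hA.1.eigenvalues := by
    funext i; simp
  simp only [PosSemidef.sqrt, star_eq_conjTranspose, conjTranspose_mul,
    diagonal_conjTranspose, conjTranspose_conjTranspose, hstar, Matrix.mul_assoc]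

lemma PosSemidef.sqrt_mul_self [DecidableEq ι] {A : Matrix ι ι 𝕜} (hA : A.PosSemidef) : hA.sqrt * hA.sqrt = A := by
  set U : Matrix ι ι 𝕜 := hA.1.eigenvectorUnitary.1
  have hUU : star U * U = 1 := Unitary.star_mul_self_of_mem hA.1.eigenvectorUnitary.2
  conv_rhs => rw [hA.1.spectral_theorem, Unitary.conjStarAlgAut_apply]
  calc hA.sqrt * hA.sqrt
      = U * (diagonal ((↑) ∘ (√·) ∘ hA.1.eigenvalues) * (star U * U) *
          diagonal ((↑) ∘ (√·) ∘ hA.1.eigenvalues)) * star U := by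
        simp only [PosSemidef.sqrt, U, Matrix.mul_assoc]
    _ = U * diagonal (RCLike.ofReal ∘ hA.1.eigenvalues) * star U := by
        rw [hUU, Matrix.mul_one, diagonal_mul_diagonal]
        congr 3
        funext i
        simp [← RCLike.ofReal_mul, Real.mul_self_sqrt (hA.eigenvalues_nonneg i)]

lemma dotProduct_mulVec_comm_of_transpose_eq {P : Matrix ι ι ℝ} (hP : Pᵀ = P) (v w : ι → ℝ) :
    v ⬝ᵥ P *ᵥ w = w ⬝ᵥ P *ᵥ v := by
  rw [dotProduct_mulVec, dotProduct_comm, ← mulVec_transpose, hP]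

lemma dotProduct_transpose_mul_self_mulVec_le {κ : Type*} [Fintype κ] [DecidableEq ι]
    (R : Matrix κ ι ℝ) (q : EuclideanSpace ℝ ι) :
    q.ofLp ⬝ᵥ (Rᵀ * R) *ᵥ q.ofLp ≤ ‖R‖ ^ 2 * ‖q‖ ^ 2 := by
  have hR : ‖WithLp.toLp 2 (R *ᵥ q.ofLp)‖ ≤ ‖R‖ * ‖q‖ := R.l2_opNorm_mulVec q
  calc q.ofLp ⬝ᵥ (Rᵀ * R) *ᵥ q.ofLp = ‖WithLp.toLp 2 (R *ᵥ q.ofLp)‖ ^ 2 := by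
        rw [← real_inner_self_eq_norm_sq, EuclideanSpace.inner_toLp_toLp, star_trivial,
          ← mulVec_mulVec, dotProduct_mulVec, vecMul_transpose]
    _ ≤ (‖R‖ * ‖q‖) ^ 2 := by gcongr
    _ = ‖R‖ ^ 2 * ‖q‖ ^ 2 := mul_pow _ _ _

lemma PosSemidef.dotProduct_mulVec_le_norm_sqrt_sq [DecidableEq ι] {P : Matrix ι ι ℝ}
    (hP : P.PosSemidef) (q : EuclideanSpace ℝ ι) :
    q.ofLp ⬝ᵥ P *ᵥ q.ofLp ≤ ‖hP.sqrt‖ ^ 2 * ‖q‖ ^ 2 := by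
  have hP_eq : hP.sqrtᵀ * hP.sqrt = P := by
    rw [← conjTranspose_eq_transpose_of_trivial, hP.conjTranspose_sqrt, hP.sqrt_mul_self]
  simpa only [hP_eq] using dotProduct_transpose_mul_self_mulVec_le hP.sqrt q

lemma PosSemidef.dotProduct_sub_mulVec_sub_le {P : Matrix ι ι ℝ} (hP : P.PosSemidef)
    {μ : ℝ} (hμ : 0 < μ) (g q : ι → ℝ) :
    (g - q) ⬝ᵥ P *ᵥ (g - q) ≤ (1 + μ) * (g ⬝ᵥ P *ᵥ g) + (1 + 1 / μ) * (q ⬝ᵥ P *ᵥ q) := by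
  have hPt : Pᵀ = P := by rw [← conjTranspose_eq_transpose_of_trivial, hP.isHermitian.eq]
  -- the two sides differ by `(μ g + q)ᵀ P (μ g + q) / μ`
  have hsq := hP.dotProduct_mulVec_nonneg (μ • g + q)
  simp only [star_trivial, mulVec_add, mulVec_sub, mulVec_smul, dotProduct_add, add_dotProduct,
    dotProduct_sub, sub_dotProduct, dotProduct_smul, smul_dotProduct, smul_eq_mul,
    dotProduct_mulVec_comm_of_transpose_eq hPt q g] at hsq ⊢
  have hgap : (1 + μ) * (g ⬝ᵥ P *ᵥ g) + (1 + 1 / μ) * (q ⬝ᵥ P *ᵥ q)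
      - (g ⬝ᵥ P *ᵥ g - g ⬝ᵥ P *ᵥ q - (g ⬝ᵥ P *ᵥ q - q ⬝ᵥ P *ᵥ q))
      = (μ * (μ * (g ⬝ᵥ P *ᵥ g) + g ⬝ᵥ P *ᵥ q) + (μ * (g ⬝ᵥ P *ᵥ q) + q ⬝ᵥ P *ᵥ q)) / μ := by
    field_simp
    ring
  have := div_nonneg hsq hμ.le
  linarith

lemma mul_dotProduct_mulVec_le_of_fromBlocks_posSemidef [DecidableEq ι] {Ξ P Θ : Matrix ι ι ℝ}
    (hΞP : Ξ * P = 1) {c γ : ℝ} (hc : 0 < c)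
    (hLMI : (fromBlocks ((1 / c) • Ξ) Θ Θᵀ (γ • Ξ)).PosSemidef) (e : ι → ℝ) :
    c * ((Θ *ᵥ P *ᵥ e) ⬝ᵥ P *ᵥ (Θ *ᵥ P *ᵥ e)) ≤ γ * (e ⬝ᵥ P *ᵥ e) := by
  have hΞ_left_inv (v : ι → ℝ) : Ξ *ᵥ P *ᵥ v = v := by rw [mulVec_mulVec, hΞP, one_mulVec]
  have htest := hLMI.dotProduct_mulVec_nonneg (Sum.elim (-(c • P *ᵥ Θ *ᵥ P *ᵥ e)) (P *ᵥ e))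
  have hfirst : ((1 / c) • Ξ) *ᵥ (-(c • P *ᵥ Θ *ᵥ P *ᵥ e)) + Θ *ᵥ P *ᵥ e = 0 := by
    rw [smul_mulVec, mulVec_neg, mulVec_smul, hΞ_left_inv, smul_neg, smul_smul,
      one_div_mul_cancel hc.ne', one_smul, neg_add_cancel]
  rw [star_trivial, fromBlocks_mulVec, sumElim_dotProduct_sumElim, Sum.elim_comp_inl,
    Sum.elim_comp_inr, hfirst, dotProduct_zero, zero_add] at htest
  simp only [dotProduct_add, smul_mulVec, mulVec_neg, mulVec_smul, hΞ_left_inv, dotProduct_neg,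
    dotProduct_smul, smul_eq_mul, dotProduct_mulVec _ Θᵀ, vecMul_transpose] at htest
  rw [dotProduct_comm (P *ᵥ e)] at htest
  linarith

lemma mulVec_add_mulVec_eq_of_data {R : Type*} [CommRing R] {σ κ τ : Type*} [DecidableEq ι]
    [Fintype σ] [Fintype κ] [Fintype τ] {A : Matrix ι σ R} {B : Matrix ι κ R}
    {Υ : Matrix σ ι R} {𝕄 : Matrix σ τ R} {𝓘 : Matrix κ τ R} {Y : Matrix τ ι R}
    {Ξ P Θ : Matrix ι ι R} (hY : 𝕄 * Y = Υ * Ξ) (hΘ : (A * 𝕄 + B * 𝓘) * Y = Θ)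
    (hΞP : Ξ * P = 1) (x : ι → R) :
    A *ᵥ Υ *ᵥ x + B *ᵥ 𝓘 *ᵥ Y *ᵥ P *ᵥ x = Θ *ᵥ P *ᵥ x := by
  have hmat : A * Υ + B * 𝓘 * Y * P = Θ * P := by
    rw [← hΘ, Matrix.add_mul, Matrix.add_mul, Matrix.mul_assoc A, hY, Matrix.mul_assoc A,
      Matrix.mul_assoc Υ, hΞP, Matrix.mul_one, Matrix.mul_assoc B]
  simp only [mulVec_mulVec, ← add_mulVec, ← Matrix.mul_assoc, hmat]

end Matrix

theorem data_driven_asf_pointwise_general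
    (n m M T : ℕ)
    (A : Matrix (Fin n) (Fin M) ℝ) (B : Matrix (Fin n) (Fin m) ℝ)
    (𝓜 : EuclideanSpace ℝ (Fin n) → EuclideanSpace ℝ (Fin M))
    (Ξ : Matrix (Fin n) (Fin n) ℝ) (hΞ : Ξ.PosDef)
    (Θ : Matrix (Fin n) (Fin n) ℝ)
    (μ γ δ : ℝ) (hμ : 0 < μ)
    (Piq : EuclideanSpace ℝ (Fin n) → EuclideanSpace ℝ (Fin n))
    (hPiq : ∀ y : EuclideanSpace ℝ (Fin n), ‖Piq y - y‖ ≤ δ)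
    (x xh : EuclideanSpace ℝ (Fin n)) (uh : Fin m → ℝ)
    (Υ₁ Υ₂ : Matrix (Fin M) (Fin n) ℝ)
    (hΥ₁ : 𝓜 x = Υ₁.mulVec x) (hΥ₂ : 𝓜 xh = Υ₂.mulVec xh)
    (𝕄 𝕄h : Matrix (Fin M) (Fin T) ℝ)
    (𝓘 𝓘h : Matrix (Fin m) (Fin T) ℝ)
    (Op Ohp : Matrix (Fin n) (Fin T) ℝ)
    (hOp : Op = A * 𝕄 + B * 𝓘) (hOhp : Ohp = A * 𝕄h + B * 𝓘h)
    (Y₁ Y₂ : Matrix (Fin T) (Fin n) ℝ)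
    (hY₁ : 𝕄 * Y₁ = Υ₁ * Ξ) (hY₂ : 𝕄h * Y₂ = Υ₂ * Ξ)
    (hΘ₁ : Op * Y₁ = Θ) (hΘ₂ : Ohp * Y₂ = Θ)
    (hLMI : (Matrix.fromBlocks ((1 / (1 + μ)) • Ξ) Θ Θᵀ (γ • Ξ)).PosSemidef)
    (u : Fin m → ℝ)
    (hu : u = 𝓘.mulVec (Y₁.mulVec (Ξ⁻¹.mulVec x)) - 𝓘h.mulVec (Y₂.mulVec (Ξ⁻¹.mulVec xh)) + uh)
    (S : EuclideanSpace ℝ (Fin n) → EuclideanSpace ℝ (Fin n) → ℝ)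
    (hS : ∀ a b : EuclideanSpace ℝ (Fin n), S a b = (a - b) ⬝ᵥ Ξ⁻¹.mulVec (a - b)) :
    S (WithLp.toLp 2 (A.mulVec (𝓜 x) + B.mulVec u)) (Piq (WithLp.toLp 2 (A.mulVec (𝓜 xh) + B.mulVec uh)))
      ≤ γ * S x xh + (1 + 1 / μ) * ‖hΞ.inv.posSemidef.sqrt‖ ^ 2 * δ ^ 2 := by
  have hΞP : Ξ * Ξ⁻¹ = 1 := mul_nonsing_inv Ξ ((isUnit_iff_isUnit_det Ξ).mp hΞ.isUnit)
  have hP := hΞ.inv.posSemidef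
  set y : EuclideanSpace ℝ (Fin n) := WithLp.toLp 2 (A *ᵥ 𝓜 xh + B *ᵥ uh)
  have hclosed : A *ᵥ 𝓜 x + B *ᵥ u - y.ofLp = Θ *ᵥ Ξ⁻¹ *ᵥ (x - xh).ofLp := by
    have h₁ := mulVec_add_mulVec_eq_of_data hY₁ (hOp ▸ hΘ₁) hΞP x.ofLp
    have h₂ := mulVec_add_mulVec_eq_of_data hY₂ (hOhp ▸ hΘ₂) hΞP xh.ofLp
    rw [WithLp.ofLp_sub, mulVec_sub, mulVec_sub, ← h₁, ← h₂, hu, hΥ₁]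
    simp only [y, hΥ₂, mulVec_add, mulVec_sub]
    abel
  have hdiff : (WithLp.toLp 2 (A *ᵥ 𝓜 x + B *ᵥ u) - Piq y).ofLp
      = Θ *ᵥ Ξ⁻¹ *ᵥ (x - xh).ofLp - (Piq y - y).ofLp := by
    rw [← hclosed, WithLp.ofLp_sub, WithLp.ofLp_sub, WithLp.ofLp_toLp]
    abel
  have hS' (a b : EuclideanSpace ℝ (Fin n)) : S a b = (a - b).ofLp ⬝ᵥ Ξ⁻¹ *ᵥ (a - b).ofLp := by
    rw [hS, WithLp.ofLp_sub]
  rw [hS', hS', hdiff]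
  calc _ ≤ (1 + μ) * ((Θ *ᵥ Ξ⁻¹ *ᵥ (x - xh).ofLp) ⬝ᵥ Ξ⁻¹ *ᵥ (Θ *ᵥ Ξ⁻¹ *ᵥ (x - xh).ofLp))
        + (1 + 1 / μ) * ((Piq y - y).ofLp ⬝ᵥ Ξ⁻¹ *ᵥ (Piq y - y).ofLp) :=
        hP.dotProduct_sub_mulVec_sub_le hμ _ _
    _ ≤ γ * ((x - xh).ofLp ⬝ᵥ Ξ⁻¹ *ᵥ (x - xh).ofLp)
        + (1 + 1 / μ) * (‖hP.sqrt‖ ^ 2 * δ ^ 2) := by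
        gcongr ?_ + _ * ?_
        · exact mul_dotProduct_mulVec_le_of_fromBlocks_posSemidef hΞP (by positivity) hLMI _
        · calc _ ≤ ‖hP.sqrt‖ ^ 2 * ‖Piq y - y‖ ^ 2 := hP.dotProduct_mulVec_le_norm_sqrt_sq _
            _ ≤ ‖hP.sqrt‖ ^ 2 * δ ^ 2 := by gcongr; exact hPiq y
    _ = _ := by ring

/-- Theorem 4.4 (data-driven ASF, pointwise form): under the data-based conditions
(9a)-(9d) and the LMI (9e), the quadratic candidate `S(a,b) = (a−b)ᵀP(a−b)` with `P = Ξ⁻¹`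
and the hybrid interface input `u = 𝓘Y₁Px − 𝓘̂Y₂Px̂ + û` satisfy
`S(A𝓜(x)+Bu, Π(A𝓜(x̂)+Bû)) ≤ γ·S(x,x̂) + (1 + 1/μ)‖P^{1/2}‖²δ²`. -/
theorem data_driven_asf_pointwise
    (n m M T : ℕ) (hn : 0 < n) (hm : 0 < m) (hM : 0 < M) (hT : 0 < T)
    (A : Matrix (Fin n) (Fin M) ℝ) (B : Matrix (Fin n) (Fin m) ℝ)
    (𝓜 : EuclideanSpace ℝ (Fin n) → EuclideanSpace ℝ (Fin M))
    (Ξ : Matrix (Fin n) (Fin n) ℝ) (hΞ : Ξ.PosDef)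
    (Θ : Matrix (Fin n) (Fin n) ℝ)
    (μ γ δ : ℝ) (hμ : 0 < μ) (hγ : γ ∈ Set.Ioo (0 : ℝ) 1) (hδ : 0 < δ)
    (Piq : EuclideanSpace ℝ (Fin n) → EuclideanSpace ℝ (Fin n))
    (hPiq : ∀ y : EuclideanSpace ℝ (Fin n), ‖Piq y - y‖ ≤ δ)
    (x xh : EuclideanSpace ℝ (Fin n)) (uh : Fin m → ℝ)
    (Υ₁ Υ₂ : Matrix (Fin M) (Fin n) ℝ)
    (hΥ₁ : 𝓜 x = Υ₁.mulVec x) (hΥ₂ : 𝓜 xh = Υ₂.mulVec xh)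
    (𝕄 𝕄h : Matrix (Fin M) (Fin T) ℝ)
    (𝓘 𝓘h : Matrix (Fin m) (Fin T) ℝ)
    (Op Ohp : Matrix (Fin n) (Fin T) ℝ)
    (hOp : Op = A * 𝕄 + B * 𝓘) (hOhp : Ohp = A * 𝕄h + B * 𝓘h)
    (Y₁ Y₂ : Matrix (Fin T) (Fin n) ℝ)
    (hY₁ : 𝕄 * Y₁ = Υ₁ * Ξ) (hY₂ : 𝕄h * Y₂ = Υ₂ * Ξ)
    (hΘ₁ : Op * Y₁ = Θ) (hΘ₂ : Ohp * Y₂ = Θ)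
    (hLMI : (Matrix.fromBlocks ((1 / (1 + μ)) • Ξ) Θ Θᵀ (γ • Ξ)).PosSemidef)
    (u : Fin m → ℝ)
    (hu : u = 𝓘.mulVec (Y₁.mulVec (Ξ⁻¹.mulVec x)) - 𝓘h.mulVec (Y₂.mulVec (Ξ⁻¹.mulVec xh)) + uh)
    (S : EuclideanSpace ℝ (Fin n) → EuclideanSpace ℝ (Fin n) → ℝ)
    (hS : ∀ a b : EuclideanSpace ℝ (Fin n), S a b = (a - b) ⬝ᵥ Ξ⁻¹.mulVec (a - b)) :
    S (WithLp.toLp 2 (A.mulVec (𝓜 x) + B.mulVec u)) (Piq (WithLp.toLp 2 (A.mulVec (𝓜 xh) + B.mulVec uh)))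
      ≤ γ * S x xh + (1 + 1 / μ) * ‖hΞ.inv.posSemidef.sqrt‖ ^ 2 * δ ^ 2 :=
  data_driven_asf_pointwise_general n m M T A B 𝓜 Ξ hΞ Θ μ γ δ hμ Piq hPiq x xh uh Υ₁ Υ₂ hΥ₁ hΥ₂ 𝕄
    𝕄h 𝓘 𝓘h Op Ohp hOp hOhp Y₁ Y₂ hY₁ hY₂ hΘ₁ hΘ₂ hLMI u hu S hS
end

section
/- (Key identity in the proof of Theorem 4.4.) Let n, m, M, T be positive integers, A ∈ ℝ^{n×M}, B ∈ ℝ^{n×m}, 𝓜 : ℝⁿ → ℝ^M, and let Π : ℝⁿ → ℝⁿ be any map. Let Ξ ∈ ℝ^{n×n} be invertible with P = Ξ⁻¹, and Θ ∈ ℝ^{n×n}. Fix x, x̂ ∈ ℝⁿ and û ∈ ℝᵐ, and suppose: there exist Υ₁, Υ₂ ∈ ℝ^{M×n} with 𝓜(x) = Υ₁·x and 𝓜(x̂) = Υ₂·x̂; matrices 𝕄, 𝕄̂ ∈ ℝ^{M×T}, 𝓘, 𝓘̂ ∈ ℝ^{m×T}, O⁺, Ô⁺ ∈ ℝ^{n×T}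 satisfy O⁺ = A𝕄 + B𝓘 and Ô⁺ = A𝕄̂ + B𝓘̂; and Y₁, Y₂ ∈ ℝ^{T×n} satisfy 𝕄·Y₁ = Υ₁·Ξ, 𝕄̂·Y₂ = Υ₂·Ξ, O⁺·Y₁ = Θ, Ô⁺·Y₂ = Θ. Define u = 𝓘·(Y₁·(P·x)) − 𝓘̂·(Y₂·(P·x̂)) + û. Then A·𝓜(x) + B·u − Π(A·𝓜(x̂) + B·û) = Θ·P·(x − x̂) + ( A·𝓜(x̂) + B·û − Π(A·𝓜(x̂) + B·û) ). -/
open Matrix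

/-- Key identity in the proof of Theorem 4.4: with `P = Ξ⁻¹` and the hybrid interface input
`u = 𝓘Y₁Px − 𝓘̂Y₂Px̂ + û`, one has
`A𝓜(x) + Bu − Π(A𝓜(x̂) + Bû) = ΘP(x − x̂) + (A𝓜(x̂) + Bû − Π(A𝓜(x̂) + Bû))`. -/
theorem data_driven_asf_key_identity
    (n m M T : ℕ) (hn : 0 < n) (hm : 0 < m) (hM : 0 < M) (hT : 0 < T)
    (A : Matrix (Fin n) (Fin M) ℝ) (B : Matrix (Fin n) (Fin m) ℝ)
    (𝓜 : (Fin n → ℝ) → (Fin M → ℝ))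
    (Piq : (Fin n → ℝ) → (Fin n → ℝ))
    (Ξ : Matrix (Fin n) (Fin n) ℝ) (hΞ : IsUnit Ξ)
    (Θ : Matrix (Fin n) (Fin n) ℝ)
    (x xh : Fin n → ℝ) (uh : Fin m → ℝ)
    (Υ₁ Υ₂ : Matrix (Fin M) (Fin n) ℝ)
    (hΥ₁ : 𝓜 x = Υ₁.mulVec x) (hΥ₂ : 𝓜 xh = Υ₂.mulVec xh)
    (𝕄 𝕄h : Matrix (Fin M) (Fin T) ℝ)
    (𝓘 𝓘h : Matrix (Fin m) (Fin T) ℝ)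
    (Op Ohp : Matrix (Fin n) (Fin T) ℝ)
    (hOp : Op = A * 𝕄 + B * 𝓘) (hOhp : Ohp = A * 𝕄h + B * 𝓘h)
    (Y₁ Y₂ : Matrix (Fin T) (Fin n) ℝ)
    (hY₁ : 𝕄 * Y₁ = Υ₁ * Ξ) (hY₂ : 𝕄h * Y₂ = Υ₂ * Ξ)
    (hΘ₁ : Op * Y₁ = Θ) (hΘ₂ : Ohp * Y₂ = Θ)
    (u : Fin m → ℝ)
    (hu : u = 𝓘.mulVec (Y₁.mulVec (Ξ⁻¹.mulVec x)) - 𝓘h.mulVec (Y₂.mulVec (Ξ⁻¹.mulVec xh)) + uh) :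
    A.mulVec (𝓜 x) + B.mulVec u - Piq (A.mulVec (𝓜 xh) + B.mulVec uh)
      = (Θ * Ξ⁻¹).mulVec (x - xh)
        + (A.mulVec (𝓜 xh) + B.mulVec uh - Piq (A.mulVec (𝓜 xh) + B.mulVec uh)) := by
  have hinv : Ξ * Ξ⁻¹ = 1 := Matrix.mul_nonsing_inv Ξ ((Matrix.isUnit_iff_isUnit_det Ξ).mp hΞ)
  have e1 : Θ * Ξ⁻¹ = A * Υ₁ + B * (𝓘 * (Y₁ * Ξ⁻¹)) := by
    rw [← hΘ₁, hOp, Matrix.add_mul, Matrix.add_mul, Matrix.mul_assoc A, hY₁,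
      ← Matrix.mul_assoc A, Matrix.mul_assoc (A * Υ₁), hinv, Matrix.mul_one]
    simp only [Matrix.mul_assoc]
  have e2 : Θ * Ξ⁻¹ = A * Υ₂ + B * (𝓘h * (Y₂ * Ξ⁻¹)) := by
    rw [← hΘ₂, hOhp, Matrix.add_mul, Matrix.add_mul, Matrix.mul_assoc A, hY₂,
      ← Matrix.mul_assoc A, Matrix.mul_assoc (A * Υ₂), hinv, Matrix.mul_one]
    simp only [Matrix.mul_assoc]
  have f1 : (Θ * Ξ⁻¹).mulVec x
      = A.mulVec (𝓜 x) + B.mulVec (𝓘.mulVec (Y₁.mulVec (Ξ⁻¹.mulVec x))) := by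
    rw [e1, Matrix.add_mulVec, hΥ₁]
    simp [Matrix.mulVec_mulVec, Matrix.mul_assoc]
  have f2 : (Θ * Ξ⁻¹).mulVec xh
      = A.mulVec (𝓜 xh) + B.mulVec (𝓘h.mulVec (Y₂.mulVec (Ξ⁻¹.mulVec xh))) := by
    rw [e2, Matrix.add_mulVec, hΥ₂]
    simp [Matrix.mulVec_mulVec, Matrix.mul_assoc]
  subst hu
  rw [Matrix.mulVec_sub, f1, f2, Matrix.mulVec_add, Matrix.mulVec_sub]
  abel
end
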